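/- arXiv:0804.2842 — 2 statements merged into one kernel-verified Lean document; each statement's English description precedes it below -/
import Mathlib

section
/- Let u be a smooth plurisubharmonic function on a neighborhood V of the origin in C^n with u(0)=0, let r(z,z_{n+1}) = 2·Re(z_{n+1}) + u(z), let U be a neighborhood of 0 with compact closure contained in V, let 0 < ε ≤ 1/2 and C > 0, and for a sufficiently small δ > 0 let ρ_δ : U → R be smooth with 0 ≤ ρ_δ ≤ 1 on U and H_{u/δ + ρ_δ}(z; s) ≥ C·δ^{-2ε}·|s|² for all z ∈ U, s ∈ C^n. Define λ̃_δ(z, z_{n+1}) = e^{r(z,z_{n+1})/δ} + e^{-3}·ρ_δ(z) on U × C. Then there exists a constant C' > 0, depending only on U, C and the bounds for the first derivatives of u on U (in particular independent of δ), such that for every z' ∈ U × C with r(z') ≥ −3δ and every t ∈ C^{n+1}, H_{λ̃_δ}(z'; t) ≥ C'·δ^{-2ε}·|t|². -/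
open scoped BigOperators

noncomputable section

abbrev Cn (n : ℕ) := EuclideanSpace ℂ (Fin n)

/-- Complex Hessian (Levi form) of a real-valued function on a complex normed space:
`H_f(z; s) = (1/4)(D²f(z)[s,s] + D²f(z)[I•s, I•s]) = Σ_{i,j} f_{z_i z̄_j}(z) s_i s̄_j`. -/
noncomputable def levi {E : Type*} [NormedAddCommGroup E] [NormedSpace ℂ E]
    (f : E → ℝ) (z s : E) : ℝ :=
  (1 / 4) * (iteratedFDeriv ℝ 2 f z ![s, s]
    + iteratedFDeriv ℝ 2 f z ![Complex.I • s, Complex.I • s])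

/-- Plurisubharmonic on a set: smooth there with positive semidefinite complex Hessian. -/
def PSHOn {E : Type*} [NormedAddCommGroup E] [NormedSpace ℂ E]
    (f : E → ℝ) (V : Set E) : Prop :=
  ContDiffOn ℝ (⊤ : ℕ∞) f V ∧ ∀ z ∈ V, ∀ s : E, 0 ≤ levi f z s

/-- Projection `C^{n+1} → C^n` onto the first `n` coordinates. -/
def proj (n : ℕ) (w : Cn (n + 1)) : Cn n := WithLp.toLp 2 (fun i : Fin n => w i.castSucc)

/-- Defining function `r(z, z_{n+1}) = 2 Re z_{n+1} + u(z)` of the rigid domain. -/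
def rfun (n : ℕ) (u : Cn n → ℝ) (w : Cn (n + 1)) : ℝ :=
  2 * (w (Fin.last n)).re + u (proj n w)

/-! ### Auxiliary lemmas on second derivatives -/

section H2
variable {E F : Type*} [NormedAddCommGroup E] [NormedSpace ℝ E]
  [NormedAddCommGroup F] [NormedSpace ℝ F]

/-- Second derivative as an iterated Fréchet derivative applied to two vectors. -/
def H2 (f : E → ℝ) (z v w : E) : ℝ := fderiv ℝ (fderiv ℝ f) z v w

lemma eventually_diff {f : E → ℝ} {z : E} (hf : ContDiffAt ℝ 2 f z) :
    ∀ᶠ y in nhds z, DifferentiableAt ℝ f y := by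
  filter_upwards [hf.eventually (by simp)] with y hy
  exact hy.differentiableAt two_ne_zero

lemma diff_fderiv {f : E → ℝ} {z : E} (hf : ContDiffAt ℝ 2 f z) :
    DifferentiableAt ℝ (fderiv ℝ f) z :=
  (hf.fderiv_right (m := 1) (by norm_num)).differentiableAt one_ne_zero

lemma H2_add {f g : E → ℝ} {z : E} (hf : ContDiffAt ℝ 2 f z) (hg : ContDiffAt ℝ 2 g z)
    (v w : E) :
    H2 (fun x => f x + g x) z v w = H2 f z v w + H2 g z v w := by
  have hev : fderiv ℝ (fun x => f x + g x) =ᶠ[nhds z]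
      fun x => fderiv ℝ f x + fderiv ℝ g x := by
    filter_upwards [eventually_diff hf, eventually_diff hg] with y hy hy'
    exact fderiv_add hy hy'
  have h2 : fderiv ℝ (fderiv ℝ fun x => f x + g x) z
      = fderiv ℝ (fderiv ℝ f) z + fderiv ℝ (fderiv ℝ g) z := by
    rw [hev.fderiv_eq, fderiv_fun_add (diff_fderiv hf) (diff_fderiv hg)]
  simp [H2, h2]

lemma H2_const_mul {f : E → ℝ} {z : E} (hf : ContDiffAt ℝ 2 f z) (c : ℝ) (v w : E) :
    H2 (fun x => c * f x) z v w = c * H2 f z v w := by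
  have hev : fderiv ℝ (fun x => c * f x) =ᶠ[nhds z] fun x => c • fderiv ℝ f x := by
    filter_upwards [eventually_diff hf] with y hy
    exact fderiv_const_mul hy c
  have h2 : fderiv ℝ (fderiv ℝ fun x => c * f x) z
      = c • fderiv ℝ (fderiv ℝ f) z := by
    rw [hev.fderiv_eq, fderiv_fun_const_smul (diff_fderiv hf) c]
  simp [H2, h2]

lemma H2_exp {f : E → ℝ} {z : E} (hf : ContDiffAt ℝ 2 f z) (v w : E) :
    H2 (fun x => Real.exp (f x)) z v w
      = Real.exp (f z) * (fderiv ℝ f z v * fderiv ℝ f z w + H2 f z v w) := by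
  have hev : fderiv ℝ (fun x => Real.exp (f x)) =ᶠ[nhds z]
      fun x => Real.exp (f x) • fderiv ℝ f x := by
    filter_upwards [eventually_diff hf] with y hy
    exact (hy.hasFDerivAt.exp).fderiv
  have hc : HasFDerivAt (fun x => Real.exp (f x)) (Real.exp (f z) • fderiv ℝ f z) z :=
    ((hf.differentiableAt two_ne_zero).hasFDerivAt).exp
  have hL : HasFDerivAt (fderiv ℝ f) (fderiv ℝ (fderiv ℝ f) z) z :=
    (diff_fderiv hf).hasFDerivAt
  have hs := hc.smul hL
  have h2 : fderiv ℝ (fderiv ℝ fun x => Real.exp (f x)) z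
      = Real.exp (f z) • fderiv ℝ (fderiv ℝ f) z
        + (Real.exp (f z) • fderiv ℝ f z).smulRight (fderiv ℝ f z) := by
    rw [hev.fderiv_eq]; exact hs.fderiv
  simp only [H2, h2, ContinuousLinearMap.add_apply, ContinuousLinearMap.smul_apply,
    ContinuousLinearMap.smulRight_apply, smul_eq_mul]
  ring

lemma H2_comp {f : F → ℝ} (P : E →L[ℝ] F) {w : E} (hf : ContDiffAt ℝ 2 f (P w))
    (v v' : E) :
    H2 (fun x => f (P x)) w v v' = H2 f (P w) (P v) (P v') := by
  have hev : fderiv ℝ (fun x => f (P x)) =ᶠ[nhds w]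
      fun x => (fderiv ℝ f (P x)).comp (P : E →L[ℝ] F) := by
    filter_upwards [(P.continuous.tendsto w).eventually (eventually_diff hf)] with y hy
    have : fderiv ℝ (f ∘ ⇑P) y = (fderiv ℝ f (P y)).comp (fderiv ℝ (⇑P) y) :=
      fderiv_comp y hy P.differentiableAt
    simpa [Function.comp_def, P.fderiv] using this
  set A : (F →L[ℝ] ℝ) →L[ℝ] (E →L[ℝ] ℝ) := (ContinuousLinearMap.compL ℝ E F ℝ).flip P with hA
  have hD : HasFDerivAt (fderiv ℝ f) (fderiv ℝ (fderiv ℝ f) (P w)) (P w) :=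
    (diff_fderiv hf).hasFDerivAt
  have h1 : HasFDerivAt (fun x => fderiv ℝ f (P x))
      ((fderiv ℝ (fderiv ℝ f) (P w)).comp (P : E →L[ℝ] F)) w :=
    hD.comp w P.hasFDerivAt
  have h2 : HasFDerivAt (fun x => (fderiv ℝ f (P x)).comp (P : E →L[ℝ] F))
      (A.comp ((fderiv ℝ (fderiv ℝ f) (P w)).comp (P : E →L[ℝ] F))) w := by
    have := A.hasFDerivAt.comp w h1
    simpa [Function.comp_def, hA] using this
  have h3 : fderiv ℝ (fderiv ℝ fun x => f (P x)) w
      = A.comp ((fderiv ℝ (fderiv ℝ f) (P w)).comp (P : E →L[ℝ] F)) := by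
    rw [hev.fderiv_eq, h2.fderiv]
  simp [H2, h3, hA]

lemma H2_clm (L : E →L[ℝ] ℝ) (z v w : E) : H2 (fun x => L x) z v w = 0 := by
  have h1 : (fderiv ℝ fun x => L x) = fun _ => L := funext fun x => L.fderiv
  rw [H2, h1]
  simp

end H2

section leviH2
variable {E : Type*} [NormedAddCommGroup E] [NormedSpace ℂ E]

lemma levi_eq_H2 (f : E → ℝ) (z s : E) :
    levi f z s = (1/4) * (H2 f z s s + H2 f z (Complex.I • s) (Complex.I • s)) := by
  simp [levi, iteratedFDeriv_two_apply, H2]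

end leviH2

/-! ### The projection and the linear part of `r` as continuous linear maps -/

section proj
variable {n : ℕ}

def projL (n : ℕ) : Cn (n + 1) →L[ℝ] Cn n :=
  LinearMap.toContinuousLinearMap
    { toFun := proj n
      map_add' := fun _ _ => rfl
      map_smul' := fun _ _ => by ext i; simp [proj] }

@[simp] lemma projL_apply (w : Cn (n + 1)) : projL n w = proj n w := rfl

def reLastL (n : ℕ) : Cn (n + 1) →L[ℝ] ℝ :=
  LinearMap.toContinuousLinearMap
    { toFun := fun w => 2 * (w (Fin.last n)).re
      map_add' := fun a b => by
        show 2 * ((a (Fin.last n)) + (b (Fin.last n))).re = _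
        simp [Complex.add_re]; ring
      map_smul' := fun c a => by
        show 2 * ((c • (a (Fin.last n)) : ℂ)).re = _
        simp [Complex.smul_re]; ring }

@[simp] lemma reLastL_apply (w : Cn (n + 1)) : reLastL n w = 2 * (w (Fin.last n)).re := rfl

lemma proj_smul_I (t : Cn (n + 1)) : proj n (Complex.I • t) = Complex.I • proj n t := by
  ext i; simp [proj]

lemma smul_I_last (t : Cn (n + 1)) :
    (Complex.I • t) (Fin.last n) = Complex.I * t (Fin.last n) := rfl

lemma norm_sq_split (t : Cn (n + 1)) :
    ‖t‖ ^ 2 = ‖proj n t‖ ^ 2 + ‖t (Fin.last n)‖ ^ 2 := by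
  have h1 : ‖t‖ ^ 2 = ∑ i : Fin (n + 1), ‖t i‖ ^ 2 := by
    rw [EuclideanSpace.norm_eq, Real.sq_sqrt (by positivity)]
  have h2 : ‖proj n t‖ ^ 2 = ∑ i : Fin n, ‖t i.castSucc‖ ^ 2 := by
    rw [EuclideanSpace.norm_eq, Real.sq_sqrt (by positivity)]; rfl
  rw [h1, h2, Fin.sum_univ_castSucc]

end proj

lemma quad_aux (a b q q' m : ℝ) (h1 : q ^ 2 ≤ m) (h2 : q' ^ 2 ≤ m) :
    (1/2) * ((a ^ 2 + b ^ 2) - m) ≤ (1/4) * ((2 * a + q) ^ 2 + (-(2 * b) + q') ^ 2) := by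
  nlinarith [sq_nonneg (2 * a + 2 * q), sq_nonneg (-(2 * b) + 2 * q')]

lemma coef_aux (m2 Cc k M2 S X2 : ℝ) (hS : 0 ≤ S) (hX2 : 0 ≤ X2)
    (h1 : m2 ≤ Cc / 2) (h2 : m2 ≤ k / 2) (h3 : k * M2 ≤ Cc) :
    m2 * (S + X2) ≤ Cc * S + k / 2 * (X2 - M2 * S) := by
  have e1 : 0 ≤ (Cc - k * M2 / 2 - m2) * S := mul_nonneg (by linarith) hS
  have e2 : 0 ≤ (k / 2 - m2) * X2 := mul_nonneg (by linarith) hX2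
  nlinarith [e1, e2]

set_option maxHeartbeats 1000000 in
/-- Step 1 of the proof of the Main Lemma: the Hessian of
`λ̃_δ = e^{r/δ} + e^{-3} ρ_δ` is bounded below by `C' δ^{-2ε}` times the identity on the
region where `r ≥ -3δ`, with `C' > 0` independent of δ. -/
theorem step_one (n : ℕ) (V : Set (Cn n)) (hV : IsOpen V) (h0V : (0 : Cn n) ∈ V)
    (u : Cn n → ℝ) (hu : PSHOn u V) (hu0 : u 0 = 0)
    (U : Set (Cn n)) (hUo : IsOpen U) (h0U : (0 : Cn n) ∈ U)
    (hUV : closure U ⊆ V) (hUc : IsCompact (closure U))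
    (C ε : ℝ) (hC : 0 < C) (hε : 0 < ε) (hε' : ε ≤ 1 / 2) :
    ∃ C' > (0 : ℝ), ∃ δ₀ > (0 : ℝ), ∀ δ : ℝ, 0 < δ → δ < δ₀ →
      ∀ ρ : Cn n → ℝ, ContDiffOn ℝ (⊤ : ℕ∞) ρ U →
        (∀ z ∈ U, 0 ≤ ρ z ∧ ρ z ≤ 1) →
        (∀ z ∈ U, ∀ s : Cn n,
          C * δ ^ (-(2 * ε)) * ‖s‖ ^ 2 ≤ levi (fun w => u w / δ + ρ w) z s) →
        ∀ w : Cn (n + 1), proj n w ∈ U → -(3 * δ) ≤ rfun n u w →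
          ∀ t : Cn (n + 1),
            C' * δ ^ (-(2 * ε)) * ‖t‖ ^ 2 ≤
              levi (fun w' => Real.exp (rfun n u w' / δ) + Real.exp (-3) * ρ (proj n w')) w t := by
  obtain ⟨hu_smooth, hu_psh⟩ := hu
  -- bound on the first derivative of u on the closure of U
  obtain ⟨M, hM⟩ := hUc.exists_bound_of_continuousOn
    ((hu_smooth.continuousOn_fderiv_of_isOpen hV (by simp)).mono hUV)
  have hM0 : 0 ≤ M := le_trans (norm_nonneg _) (hM 0 (subset_closure h0U))
  set κ : ℝ := min 1 (C / (M ^ 2 + 1)) with hκdef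
  have hκpos : 0 < κ := lt_min one_pos (by positivity)
  have hκ1 : κ ≤ 1 := min_le_left _ _
  have hκM : κ * M ^ 2 ≤ C := by
    have h1 : κ ≤ C / (M ^ 2 + 1) := min_le_right _ _
    have h2 : κ * (M ^ 2 + 1) ≤ C := by
      rw [← le_div_iff₀ (by positivity)]; exact h1
    have h3 : κ * (M ^ 2 + 1) = κ * M ^ 2 + κ := by ring
    linarith
  refine ⟨Real.exp (-3) * min (C / 2) (κ / 2), by positivity, 1, one_pos, ?_⟩
  intro δ hδ hδ1 ρ hρs hρb hρlevi w hwU hr t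
  set z : Cn n := proj n w with hz
  set s : Cn n := proj n t with hs
  have hzV : z ∈ V := hUV (subset_closure hwU)
  have hu2 : ContDiffAt ℝ 2 u z := (hu_smooth.contDiffAt (hV.mem_nhds hzV)).of_le (WithTop.coe_le_coe.2 (le_top : (2 : ℕ∞) ≤ ⊤))
  have hρ2 : ContDiffAt ℝ 2 ρ z := (hρs.contDiffAt (hUo.mem_nhds hwU)).of_le (WithTop.coe_le_coe.2 (le_top : (2 : ℕ∞) ≤ ⊤))
  have hPcd : ContDiffAt ℝ 2 (fun x : Cn (n + 1) => u (projL n x)) w :=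
    hu2.comp w (projL n).contDiff.contDiffAt
  have hrcd : ContDiffAt ℝ 2 (fun x : Cn (n + 1) => reLastL n x + u (projL n x)) w :=
    ((reLastL n).contDiff.contDiffAt).add hPcd
  have hφcd : ContDiffAt ℝ 2 (fun x : Cn (n + 1) => δ⁻¹ * (reLastL n x + u (projL n x))) w :=
    contDiffAt_const.mul hrcd
  have hexpcd : ContDiffAt ℝ 2
      (fun x : Cn (n + 1) => Real.exp (δ⁻¹ * (reLastL n x + u (projL n x)))) w := hφcd.exp
  have hρPcd : ContDiffAt ℝ 2 (fun x : Cn (n + 1) => ρ (projL n x)) w :=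
    hρ2.comp w (projL n).contDiff.contDiffAt
  have hρPcd' : ContDiffAt ℝ 2 (fun x : Cn (n + 1) => Real.exp (-3) * ρ (projL n x)) w :=
    contDiffAt_const.mul hρPcd
  -- the first derivative of φ = r/δ at w
  set p : Cn n →L[ℝ] ℝ := fderiv ℝ u z with hp
  have hd1 : HasFDerivAt (fun x : Cn (n + 1) => u (projL n x)) (p.comp (projL n)) w :=
    ((hu2.differentiableAt two_ne_zero).hasFDerivAt).comp w (projL n).hasFDerivAt
  have hd2 : HasFDerivAt (fun x : Cn (n + 1) => reLastL n x + u (projL n x))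
      (reLastL n + p.comp (projL n)) w := ((reLastL n).hasFDerivAt).add hd1
  have hd3 : HasFDerivAt (fun x : Cn (n + 1) => δ⁻¹ * (reLastL n x + u (projL n x)))
      (δ⁻¹ • (reLastL n + p.comp (projL n))) w := hd2.const_mul δ⁻¹
  -- rewrite the target function
  have hfun : (fun w' => Real.exp (rfun n u w' / δ) + Real.exp (-3) * ρ (proj n w'))
      = (fun x : Cn (n + 1) =>
          Real.exp (δ⁻¹ * (reLastL n x + u (projL n x))) + Real.exp (-3) * ρ (projL n x)) := by
    funext x
    rw [div_eq_inv_mul]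
    rfl
  rw [hfun]
  -- compute the Hessian of the target function in a single shot
  have hH2F : ∀ a : Cn (n + 1),
      H2 (fun x : Cn (n + 1) =>
          Real.exp (δ⁻¹ * (reLastL n x + u (projL n x))) + Real.exp (-3) * ρ (projL n x)) w a a
        = Real.exp (δ⁻¹ * (reLastL n w + u z))
            * ((δ⁻¹ * (reLastL n a + p (proj n a))) ^ 2
                + δ⁻¹ * (0 + H2 u z (proj n a) (proj n a)))
          + Real.exp (-3) * H2 ρ z (proj n a) (proj n a) := by
    intro a
    rw [H2_add hexpcd hρPcd', H2_exp hφcd, H2_const_mul hρPcd _,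
      H2_comp (projL n) hρ2, H2_const_mul hrcd,
      H2_add ((reLastL n).contDiff.contDiffAt) hPcd, H2_clm, H2_comp (projL n) hu2,
      hd3.fderiv]
    simp only [ContinuousLinearMap.smul_apply, ContinuousLinearMap.add_apply,
      ContinuousLinearMap.coe_comp', Function.comp_apply, projL_apply, smul_eq_mul]
    ring
  -- levi of the target function
  set X : ℝ := levi u z s with hX
  set Y : ℝ := levi ρ z s with hY
  set a1 : ℝ := (t (Fin.last n)).re with ha1
  set b1 : ℝ := (t (Fin.last n)).im with hb1
  set q : ℝ := p s with hq
  set q' : ℝ := p (Complex.I • s) with hq'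
  have hreI : reLastL n (Complex.I • t) = -(2 * b1) := by
    rw [reLastL_apply, smul_I_last]
    simp [Complex.mul_re, hb1]
  have hprojI : proj n (Complex.I • t) = Complex.I • s := proj_smul_I t
  have hE3 : (0:ℝ) < Real.exp (-3) := Real.exp_pos _
  set E : ℝ := Real.exp (δ⁻¹ * (reLastL n w + u z)) with hEdef
  have hlF : levi (fun x : Cn (n + 1) =>
        Real.exp (δ⁻¹ * (reLastL n x + u (projL n x))) + Real.exp (-3) * ρ (projL n x)) w t
      = E * (δ⁻¹ * X
          + (1/4) * ((δ⁻¹ * (2 * a1 + q)) ^ 2 + (δ⁻¹ * (-(2 * b1) + q')) ^ 2))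
        + Real.exp (-3) * Y := by
    rw [levi_eq_H2, hH2F t, hH2F (Complex.I • t), hprojI, hreI,
      hX, hY, levi_eq_H2, levi_eq_H2]
    rw [reLastL_apply]
    ring_nf
    simp only [hq, hq', ha1, hs]
    ring
  rw [hlF]
  -- the hypothesis on the Hessian of u/δ + ρ
  have hlow : C * δ ^ (-(2 * ε)) * ‖s‖ ^ 2 ≤ δ⁻¹ * X + Y := by
    have h0 := hρlevi z hwU s
    have heq : levi (fun x => u x / δ + ρ x) z s = δ⁻¹ * X + Y := by
      have hfun2 : (fun x => u x / δ + ρ x) = fun x => δ⁻¹ * u x + ρ x := by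
        funext x; rw [div_eq_inv_mul]
      rw [hfun2, levi_eq_H2, H2_add (contDiffAt_const.mul hu2) hρ2,
        H2_add (contDiffAt_const.mul hu2) hρ2, H2_const_mul hu2, H2_const_mul hu2,
        hX, hY, levi_eq_H2, levi_eq_H2]
      ring
    rw [heq] at h0
    exact h0
  -- basic positivity and bounds
  have hX0 : 0 ≤ X := hu_psh z hzV s
  have hEe3 : Real.exp (-3) ≤ E := by
    rw [hEdef]
    apply Real.exp_le_exp.2
    have hrw : rfun n u w = reLastL n w + u z := rfl
    rw [← hrw]
    rw [inv_mul_eq_div, le_div_iff₀ hδ]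
    linarith
  have hqb : |q| ≤ M * ‖s‖ := by
    have := p.le_opNorm s
    have hMz : ‖p‖ ≤ M := hM z (subset_closure hwU)
    calc |q| = ‖p s‖ := (Real.norm_eq_abs _).symm
      _ ≤ ‖p‖ * ‖s‖ := p.le_opNorm s
      _ ≤ M * ‖s‖ := mul_le_mul_of_nonneg_right hMz (norm_nonneg _)
  have hqb' : |q'| ≤ M * ‖s‖ := by
    have hMz : ‖p‖ ≤ M := hM z (subset_closure hwU)
    have hnorm : ‖Complex.I • s‖ = ‖s‖ := by
      rw [norm_smul, Complex.norm_I, one_mul]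
    calc |q'| = ‖p (Complex.I • s)‖ := (Real.norm_eq_abs _).symm
      _ ≤ ‖p‖ * ‖Complex.I • s‖ := p.le_opNorm _
      _ = ‖p‖ * ‖s‖ := by rw [hnorm]
      _ ≤ M * ‖s‖ := mul_le_mul_of_nonneg_right hMz (norm_nonneg _)
  -- rpow facts
  set D : ℝ := δ ^ (-(2 * ε)) with hD
  have hDpos : 0 < D := Real.rpow_pos_of_pos hδ _
  have hDle : D ≤ δ⁻¹ ^ 2 := by
    have h1 : δ ^ (-(2 * ε)) ≤ δ ^ (-(2:ℝ)) :=
      Real.rpow_le_rpow_of_exponent_ge hδ hδ1.le (by linarith)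
    have h2 : δ ^ (-(2:ℝ)) = δ⁻¹ ^ 2 := by
      rw [Real.rpow_neg hδ.le, show (2:ℝ) = ((2:ℕ):ℝ) by norm_num, Real.rpow_natCast,
        inv_pow]
    rw [hD, ← h2]; exact h1
  -- the square term
  set Q0 : ℝ := (1/4) * ((2 * a1 + q) ^ 2 + (-(2 * b1) + q') ^ 2) with hQ0
  have hQrw : (1/4) * ((δ⁻¹ * (2 * a1 + q)) ^ 2 + (δ⁻¹ * (-(2 * b1) + q')) ^ 2)
      = δ⁻¹ ^ 2 * Q0 := by rw [hQ0]; ring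
  have hQ00 : 0 ≤ Q0 := by positivity
  set X2 : ℝ := a1 ^ 2 + b1 ^ 2 with hX2def
  have hX20 : 0 ≤ X2 := by positivity
  have hQ0low : (1/2) * (X2 - M ^ 2 * ‖s‖ ^ 2) ≤ Q0 := by
    have h1 : q ^ 2 ≤ M ^ 2 * ‖s‖ ^ 2 := by
      have : q ^ 2 ≤ (M * ‖s‖) ^ 2 :=
        (sq_abs q) ▸ pow_le_pow_left₀ (abs_nonneg q) hqb 2
      calc q ^ 2 ≤ (M * ‖s‖) ^ 2 := this
        _ = M ^ 2 * ‖s‖ ^ 2 := by ring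
    have h2 : q' ^ 2 ≤ M ^ 2 * ‖s‖ ^ 2 := by
      have : q' ^ 2 ≤ (M * ‖s‖) ^ 2 :=
        (sq_abs q') ▸ pow_le_pow_left₀ (abs_nonneg q') hqb' 2
      calc q' ^ 2 ≤ (M * ‖s‖) ^ 2 := this
        _ = M ^ 2 * ‖s‖ ^ 2 := by ring
    rw [hQ0, hX2def]
    exact quad_aux a1 b1 q q' (M ^ 2 * ‖s‖ ^ 2) h1 h2
  -- the key lower bound for the square term
  have hclaim : κ / 2 * D * (X2 - M ^ 2 * ‖s‖ ^ 2) ≤ δ⁻¹ ^ 2 * Q0 := by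
    rcases le_or_gt (X2 - M ^ 2 * ‖s‖ ^ 2) 0 with hneg | hpos
    · have hL : κ / 2 * D * (X2 - M ^ 2 * ‖s‖ ^ 2) ≤ 0 :=
        mul_nonpos_of_nonneg_of_nonpos (by positivity) hneg
      have hR : 0 ≤ δ⁻¹ ^ 2 * Q0 := by positivity
      linarith
    · have h1 : κ / 2 * D * (X2 - M ^ 2 * ‖s‖ ^ 2)
          ≤ (1/2) * (δ⁻¹ ^ 2) * (X2 - M ^ 2 * ‖s‖ ^ 2) := by
        apply mul_le_mul_of_nonneg_right _ hpos.le
        calc κ / 2 * D ≤ 1 / 2 * D :=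
              mul_le_mul_of_nonneg_right (by linarith) hDpos.le
          _ ≤ 1 / 2 * δ⁻¹ ^ 2 := by
              have := mul_le_mul_of_nonneg_left hDle (by norm_num : (0:ℝ) ≤ 1 / 2)
              linarith
      calc κ / 2 * D * (X2 - M ^ 2 * ‖s‖ ^ 2)
          ≤ (1/2) * (δ⁻¹ ^ 2) * (X2 - M ^ 2 * ‖s‖ ^ 2) := h1
        _ = δ⁻¹ ^ 2 * ((1/2) * (X2 - M ^ 2 * ‖s‖ ^ 2)) := by ring
        _ ≤ δ⁻¹ ^ 2 * Q0 := by
            apply mul_le_mul_of_nonneg_left hQ0low (by positivity)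
  -- norm decomposition
  have htnorm : ‖t‖ ^ 2 = ‖s‖ ^ 2 + X2 := by
    rw [norm_sq_split, hX2def, ha1, hb1, ← hs]
    congr 1
    rw [Complex.sq_norm, Complex.normSq_apply]
    ring
  -- assemble
  set m2 : ℝ := min (C / 2) (κ / 2) with hm2
  have hm2pos : 0 < m2 := lt_min (by linarith) (by linarith)
  have hδX : 0 ≤ δ⁻¹ * X := by positivity
  have hQQ : 0 ≤ δ⁻¹ ^ 2 * Q0 := by positivity
  have hstep1 : Real.exp (-3) * (δ⁻¹ * X + δ⁻¹ ^ 2 * Q0)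
      ≤ E * (δ⁻¹ * X + δ⁻¹ ^ 2 * Q0) :=
    mul_le_mul_of_nonneg_right hEe3 (by positivity)
  have hcoef : m2 * (‖s‖ ^ 2 + X2) ≤ C * ‖s‖ ^ 2 + κ / 2 * (X2 - M ^ 2 * ‖s‖ ^ 2) := by
    exact coef_aux m2 C κ (M ^ 2) (‖s‖ ^ 2) X2 (sq_nonneg _) hX20
      (min_le_left _ _) (min_le_right _ _) hκM
  have hmain : m2 * D * (‖s‖ ^ 2 + X2) ≤ (δ⁻¹ * X + Y) + δ⁻¹ ^ 2 * Q0 := by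
    calc m2 * D * (‖s‖ ^ 2 + X2) = D * (m2 * (‖s‖ ^ 2 + X2)) := by ring
      _ ≤ D * (C * ‖s‖ ^ 2 + κ / 2 * (X2 - M ^ 2 * ‖s‖ ^ 2)) :=
          mul_le_mul_of_nonneg_left hcoef hDpos.le
      _ = C * D * ‖s‖ ^ 2 + κ / 2 * D * (X2 - M ^ 2 * ‖s‖ ^ 2) := by ring
      _ ≤ (δ⁻¹ * X + Y) + δ⁻¹ ^ 2 * Q0 := add_le_add hlow hclaim
  calc Real.exp (-3) * m2 * D * ‖t‖ ^ 2
      = Real.exp (-3) * (m2 * D * (‖s‖ ^ 2 + X2)) := by rw [htnorm]; ring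
    _ ≤ Real.exp (-3) * ((δ⁻¹ * X + Y) + δ⁻¹ ^ 2 * Q0) :=
        mul_le_mul_of_nonneg_left hmain hE3.le
    _ = Real.exp (-3) * (δ⁻¹ * X + δ⁻¹ ^ 2 * Q0) + Real.exp (-3) * Y := by ring
    _ ≤ E * (δ⁻¹ * X + δ⁻¹ ^ 2 * Q0) + Real.exp (-3) * Y := by linarith
    _ = E * (δ⁻¹ * X
          + (1/4) * ((δ⁻¹ * (2 * a1 + q)) ^ 2 + (δ⁻¹ * (-(2 * b1) + q')) ^ 2))
        + Real.exp (-3) * Y := by rw [hQrw]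

end
end

section
/- Let u be a smooth plurisubharmonic function on a neighborhood V of the origin in C^n with u(0)=0, let r(z,z_{n+1}) = 2·Re(z_{n+1}) + u(z), let U be a neighborhood of 0 with compact closure contained in V, let 0 < ε ≤ 1/2 and C > 0, and for a sufficiently small δ > 0 let ρ_δ : U → R be smooth with 0 ≤ ρ_δ ≤ 1 on U and H_{u/δ + ρ_δ}(z; s) ≥ C·δ^{-2ε}·|s|² for all z ∈ U, s ∈ C^n. Define λ̃_δ = e^{r/δ} + e^{-3}·ρ_δ on U × C. Let p : R → R be a smooth, convex, nondecreasing function with p(t) = 0 for t ≤ e^{-2} and p(t) > 0, p'(t) > 0 for t > e^{-2}. Then λ_δ = p ∘ λ̃_δ is plurisubharmonic on U × C. -/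
open scoped BigOperators

noncomputable section

/-! ### Auxiliary second-derivative calculus -/

open Filter Topology

/-- Second derivative quadratic form. -/
def Q2 {E : Type*} [NormedAddCommGroup E] [NormedSpace ℝ E] (f : E → ℝ) (z s : E) : ℝ :=
  fderiv ℝ (fderiv ℝ f) z s s

section Qrules

variable {E F : Type*} [NormedAddCommGroup E] [NormedSpace ℝ E]
  [NormedAddCommGroup F] [NormedSpace ℝ F]

theorem iter2_eq_Q2 (f : E → ℝ) (z s : E) :
    iteratedFDeriv ℝ 2 f z ![s, s] = Q2 f z s := by
  rw [iteratedFDeriv_two_apply]; rfl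

theorem diffAt_of_cdo {Ω : Set E} (hΩ : IsOpen Ω) {f : E → ℝ} (hf : ContDiffOn ℝ 2 f Ω)
    {w : E} (hw : w ∈ Ω) : DifferentiableAt ℝ f w :=
  (hf.contDiffAt (hΩ.mem_nhds hw)).differentiableAt (by norm_num)

theorem diffAt_fderiv_of_cdo {Ω : Set E} (hΩ : IsOpen Ω) {f : E → ℝ} (hf : ContDiffOn ℝ 2 f Ω)
    {w : E} (hw : w ∈ Ω) : DifferentiableAt ℝ (fderiv ℝ f) w :=
  ((hf.contDiffAt (hΩ.mem_nhds hw)).fderiv_right (m := 1) (by norm_num)).differentiableAt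
    (by norm_num)

theorem Q2_add {Ω : Set E} (hΩ : IsOpen Ω) {z : E} (hz : z ∈ Ω)
    {f g : E → ℝ} (hf : ContDiffOn ℝ 2 f Ω) (hg : ContDiffOn ℝ 2 g Ω) (s : E) :
    Q2 (fun w => f w + g w) z s = Q2 f z s + Q2 g z s := by
  have h1 : fderiv ℝ (fun w => f w + g w) =ᶠ[𝓝 z] fun w => fderiv ℝ f w + fderiv ℝ g w := by
    filter_upwards [hΩ.mem_nhds hz] with w hw
    exact fderiv_add (diffAt_of_cdo hΩ hf hw) (diffAt_of_cdo hΩ hg hw)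
  rw [Q2, h1.fderiv_eq, fderiv_fun_add (diffAt_fderiv_of_cdo hΩ hf hz) (diffAt_fderiv_of_cdo hΩ hg hz)]
  rfl

theorem Q2_const_mul {Ω : Set E} (hΩ : IsOpen Ω) {z : E} (hz : z ∈ Ω)
    {f : E → ℝ} (hf : ContDiffOn ℝ 2 f Ω) (c : ℝ) (s : E) :
    Q2 (fun w => c * f w) z s = c * Q2 f z s := by
  have h1 : fderiv ℝ (fun w => c * f w) =ᶠ[𝓝 z] fun w => c • fderiv ℝ f w := by
    filter_upwards [hΩ.mem_nhds hz] with w hw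
    exact fderiv_const_mul (diffAt_of_cdo hΩ hf hw) c
  rw [Q2, h1.fderiv_eq, fderiv_fun_const_smul (diffAt_fderiv_of_cdo hΩ hf hz) c]
  rfl

theorem Q2_clm_apply (M : E →L[ℝ] ℝ) (z s : E) : Q2 (fun w => M w) z s = 0 := by
  have : fderiv ℝ (fun w => M w) = fun _ => M := funext fun w => M.fderiv
  rw [Q2, this, fderiv_fun_const]
  rfl

theorem Q2_comp_clm (L : E →L[ℝ] F) {Ω : Set F} (hΩ : IsOpen Ω) {f : F → ℝ}
    (hf : ContDiffOn ℝ 2 f Ω) {z : E} (hz : L z ∈ Ω) (s : E) :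
    Q2 (fun w => f (L w)) z s = Q2 f (L z) (L s) := by
  set Φ : (F →L[ℝ] ℝ) →L[ℝ] (E →L[ℝ] ℝ) := (ContinuousLinearMap.compL ℝ E F ℝ).flip L with hΦ
  have h1 : fderiv ℝ (fun w => f (L w)) =ᶠ[𝓝 z] fun w => Φ (fderiv ℝ f (L w)) := by
    filter_upwards [L.continuous.continuousAt.preimage_mem_nhds (hΩ.mem_nhds hz)] with w hw
    have h := ((diffAt_of_cdo hΩ hf hw).hasFDerivAt.comp w L.hasFDerivAt).fderiv
    simpa [Function.comp_def, hΦ] using h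
  have hd2 : HasFDerivAt (fderiv ℝ f) (fderiv ℝ (fderiv ℝ f) (L z)) (L z) :=
    (diffAt_fderiv_of_cdo hΩ hf hz).hasFDerivAt
  have h3 : HasFDerivAt (fun w => Φ (fderiv ℝ f (L w)))
      (Φ.comp ((fderiv ℝ (fderiv ℝ f) (L z)).comp L)) z := by
    have := (Φ.hasFDerivAt.comp (L z) hd2).comp z L.hasFDerivAt
    simpa [Function.comp_def, ContinuousLinearMap.comp_assoc] using this
  rw [Q2, h1.fderiv_eq, h3.fderiv]
  simp [hΦ, Q2]

theorem Q2_comp (φ : ℝ → ℝ) (hφ : ContDiff ℝ 2 φ) {Ω : Set E} (hΩ : IsOpen Ω) {f : E → ℝ}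
    (hf : ContDiffOn ℝ 2 f Ω) {z : E} (hz : z ∈ Ω) (s : E) :
    Q2 (fun w => φ (f w)) z s
      = deriv (deriv φ) (f z) * (fderiv ℝ f z s) ^ 2 + deriv φ (f z) * Q2 f z s := by
  have h1 : fderiv ℝ (fun w => φ (f w)) =ᶠ[𝓝 z]
      fun w => deriv φ (f w) • fderiv ℝ f w := by
    filter_upwards [hΩ.mem_nhds hz] with w hw
    have h := ((hφ.differentiable (by norm_num) (f w)).hasDerivAt.comp_hasFDerivAt w
      (diffAt_of_cdo hΩ hf hw).hasFDerivAt).fderiv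
    simpa [Function.comp_def] using h
  have hφ' : HasDerivAt (deriv φ) (deriv (deriv φ) (f z)) (f z) := by
    have h2 : ContDiff ℝ ((1 : ℕ∞) + 1) φ := by exact_mod_cast hφ
    have := (contDiff_succ_iff_deriv.mp h2).2.2
    exact ((this.differentiable (by norm_num)) (f z)).hasDerivAt
  have hc : HasFDerivAt (fun w => deriv φ (f w))
      ((deriv (deriv φ) (f z)) • fderiv ℝ f z) z := by
    have := hφ'.comp_hasFDerivAt z (diffAt_of_cdo hΩ hf hz).hasFDerivAt
    simpa [Function.comp_def] using this
  have hF : HasFDerivAt (fderiv ℝ f) (fderiv ℝ (fderiv ℝ f) z) z :=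
    (diffAt_fderiv_of_cdo hΩ hf hz).hasFDerivAt
  have h2 : HasFDerivAt (fun w => deriv φ (f w) • fderiv ℝ f w) _ z := hc.smul hF
  rw [Q2, h1.fderiv_eq, h2.fderiv]
  simp [Q2]
  ring

end Qrules

/-! ### One-variable facts about `p` -/

theorem deriv_nonneg_of_monotone {g : ℝ → ℝ} (hg : Monotone g) (x : ℝ) : 0 ≤ deriv g x := by
  by_cases hd : DifferentiableAt ℝ g x
  · have h := hasDerivAt_iff_tendsto_slope.1 hd.hasDerivAt
    have h2 : Tendsto (slope g x) (𝓝[>] x) (𝓝 (deriv g x)) :=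
      h.mono_left (nhdsWithin_mono _ fun y hy => ne_of_gt hy)
    refine ge_of_tendsto h2 ?_
    filter_upwards [self_mem_nhdsWithin] with y hy
    rw [slope_def_field]
    exact div_nonneg (sub_nonneg.2 (hg (le_of_lt hy))) (sub_nonneg.2 (le_of_lt hy))
  · rw [deriv_zero_of_not_differentiableAt hd]

theorem deriv_p_eq_zero {p : ℝ → ℝ} (hp : ContDiff ℝ (⊤ : ℕ∞) p) {c : ℝ}
    (hp0 : ∀ t : ℝ, t ≤ c → p t = 0) : ∀ t : ℝ, t ≤ c → deriv p t = 0 := by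
  have hcont : Continuous (deriv p) :=
    (contDiff_one_iff_deriv.mp (hp.of_le (by simp))).2
  have hlt : ∀ t < c, deriv p t = 0 := by
    intro t ht
    have hev : p =ᶠ[𝓝 t] fun _ => (0 : ℝ) := by
      filter_upwards [Iio_mem_nhds ht] with s hs
      exact hp0 s (le_of_lt hs)
    rw [hev.deriv_eq, deriv_const]
  intro t ht
  rcases lt_or_eq_of_le ht with h | rfl
  · exact hlt t h
  · have hclosed : IsClosed {t : ℝ | deriv p t = 0} :=
      isClosed_eq hcont continuous_const
    have hsub : Set.Iic t ⊆ {t : ℝ | deriv p t = 0} := by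
      have h1 : Set.Iio t ⊆ {t : ℝ | deriv p t = 0} := fun s hs => hlt s hs
      have := hclosed.closure_subset_iff.2 h1
      rwa [closure_Iio] at this
    exact hsub (Set.mem_Iic.2 le_rfl)

theorem deriv2_p_nonneg {p : ℝ → ℝ} (hp : ContDiff ℝ (⊤ : ℕ∞) p)
    (hpconv : ConvexOn ℝ Set.univ p) (t : ℝ) : 0 ≤ deriv (deriv p) t := by
  have hmono : Monotone (deriv p) := by
    have := hpconv.monotoneOn_deriv fun x _ =>
      (hp.differentiable (by simp)).differentiableAt
    exact monotoneOn_univ.mp this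
  exact deriv_nonneg_of_monotone hmono t

/-! ### Levi form computations (generic complex normed spaces) -/

section LeviRules

variable {E F : Type*} [NormedAddCommGroup E] [NormedSpace ℂ E]
  [NormedAddCommGroup F] [NormedSpace ℂ F]

theorem levi_eq_Q2 (f : E → ℝ) (z s : E) :
    levi f z s = (1 / 4) * (Q2 f z s + Q2 f z (Complex.I • s)) := by
  rw [levi, iter2_eq_Q2, iter2_eq_Q2]

/-- Levi form of `p ∘ A`. -/
theorem levi_comp_p (p : ℝ → ℝ) (hp : ContDiff ℝ 2 p) {Ω : Set E} (hΩ : IsOpen Ω)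
    {A : E → ℝ} (hA : ContDiffOn ℝ 2 A Ω) {w : E} (hw : w ∈ Ω) (s : E) :
    ∃ X : ℝ, 0 ≤ X ∧ levi (fun w' => p (A w')) w s
      = deriv (deriv p) (A w) * X + deriv p (A w) * levi A w s := by
  refine ⟨(1 / 4) * ((fderiv ℝ A w s) ^ 2 + (fderiv ℝ A w (Complex.I • s)) ^ 2),
    by positivity, ?_⟩
  rw [levi_eq_Q2, levi_eq_Q2, Q2_comp p hp hΩ hA hw, Q2_comp p hp hΩ hA hw]
  ring

/-- Levi form of `u/δ + ρ` splits. -/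
theorem levi_div_add (δ : ℝ) {Ω : Set F} (hΩ : IsOpen Ω) {u ρ : F → ℝ}
    (hu : ContDiffOn ℝ 2 u Ω) (hρ : ContDiffOn ℝ 2 ρ Ω) {z : F} (hz : z ∈ Ω) (s : F) :
    levi (fun z' => u z' / δ + ρ z') z s = δ⁻¹ * levi u z s + levi ρ z s := by
  have hfe : (fun z' => u z' / δ + ρ z') = fun z' => δ⁻¹ * u z' + ρ z' := by
    funext z'; rw [div_eq_inv_mul]
  have hmul : ContDiffOn ℝ 2 (fun z' => δ⁻¹ * u z') Ω := contDiffOn_const.mul hu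
  rw [hfe, levi_eq_Q2, Q2_add hΩ hz hmul hρ, Q2_add hΩ hz hmul hρ,
    Q2_const_mul hΩ hz hu δ⁻¹, Q2_const_mul hΩ hz hu δ⁻¹, levi_eq_Q2, levi_eq_Q2]
  ring

/-- Master computation of the Levi form of `λ̃_δ = exp((2 Re Lc + u∘L)/δ) + e3·(ρ∘L)`. -/
theorem levi_master (L : E →L[ℂ] F) (Lc : E →L[ℂ] ℂ) (U V : Set F)
    (hUo : IsOpen U) (hVo : IsOpen V) (hUV : U ⊆ V)
    (u ρ : F → ℝ) (hu2 : ContDiffOn ℝ 2 u V) (hρ2 : ContDiffOn ℝ 2 ρ U)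
    (δ e3 : ℝ) {w : E} (hw : L w ∈ U) (s : E) :
    ∃ X : ℝ, 0 ≤ X ∧
      levi (fun w' => Real.exp ((2 * (Lc w').re + u (L w')) / δ) + e3 * ρ (L w')) w s
        = X + Real.exp ((2 * (Lc w).re + u (L w)) / δ) * δ⁻¹ * levi u (L w) (L s)
          + e3 * levi ρ (L w) (L s) := by
  set M : E →L[ℝ] ℝ := (2 : ℝ) • (Complex.reCLM.comp (Lc.restrictScalars ℝ)) with hM
  have hMw : ∀ w' : E, 2 * (Lc w').re = M w' := by
    intro w'; simp [hM, smul_eq_mul]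
  set Lr : E →L[ℝ] F := L.restrictScalars ℝ with hLr
  have hΩo : IsOpen (Lr ⁻¹' U) := hUo.preimage Lr.continuous
  have hwΩ : w ∈ Lr ⁻¹' U := hw
  have hmapsV : ∀ x ∈ Lr ⁻¹' U, Lr x ∈ V := fun x hx => hUV hx
  -- smoothness of the pieces
  have hM2 : ContDiffOn ℝ 2 (fun w' => M w') (Lr ⁻¹' U) := M.contDiff.contDiffOn
  have huL2 : ContDiffOn ℝ 2 (fun w' : E => u (L w')) (Lr ⁻¹' U) :=
    hu2.comp (Lr.contDiff.contDiffOn) hmapsV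
  have hsum2 : ContDiffOn ℝ 2 (fun w' : E => M w' + u (L w')) (Lr ⁻¹' U) := hM2.add huL2
  have ha2 : ContDiffOn ℝ 2 (fun w' : E => (M w' + u (L w')) / δ) (Lr ⁻¹' U) :=
    hsum2.div_const δ
  have hexpa2 : ContDiffOn ℝ 2 (fun w' : E => Real.exp ((M w' + u (L w')) / δ)) (Lr ⁻¹' U) :=
    Real.contDiff_exp.comp_contDiffOn ha2
  have hρL2 : ContDiffOn ℝ 2 (fun w' : E => ρ (L w')) (Lr ⁻¹' U) :=
    hρ2.comp (Lr.contDiff.contDiffOn) (fun x hx => hx)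
  have he3ρ2 : ContDiffOn ℝ 2 (fun w' : E => e3 * ρ (L w')) (Lr ⁻¹' U) :=
    contDiffOn_const.mul hρL2
  -- Q2 of the function (M + u∘L)/δ
  have hQsum : ∀ t : E, Q2 (fun w' : E => M w' + u (L w')) w t = Q2 u (L w) (L t) := by
    intro t
    rw [Q2_add hΩo hwΩ hM2 huL2, Q2_clm_apply M w t]
    have h := Q2_comp_clm Lr hVo hu2 (hmapsV w hwΩ) t
    rw [show Q2 (fun w' : E => u (L w')) w t = Q2 u (L w) (L t) from h]
    ring
  have hQa : ∀ t : E, Q2 (fun w' : E => (M w' + u (L w')) / δ) w t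
      = δ⁻¹ * Q2 u (L w) (L t) := by
    intro t
    have hfe : (fun w' : E => (M w' + u (L w')) / δ)
        = fun w' : E => δ⁻¹ * (M w' + u (L w')) := by
      funext w'; rw [div_eq_inv_mul]
    rw [hfe, Q2_const_mul hΩo hwΩ hsum2 δ⁻¹, hQsum t]
  -- Q2 of exp part
  have hQexp : ∀ t : E, Q2 (fun w' : E => Real.exp ((M w' + u (L w')) / δ)) w t
      = Real.exp ((M w + u (L w)) / δ)
          * ((fderiv ℝ (fun w' : E => (M w' + u (L w')) / δ) w t) ^ 2
            + δ⁻¹ * Q2 u (L w) (L t)) := by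
    intro t
    have h := Q2_comp Real.exp Real.contDiff_exp hΩo ha2 hwΩ t
    rw [show Q2 (fun w' : E => Real.exp ((M w' + u (L w')) / δ)) w t
        = deriv (deriv Real.exp) ((M w + u (L w)) / δ)
            * (fderiv ℝ (fun w' : E => (M w' + u (L w')) / δ) w t) ^ 2
          + deriv Real.exp ((M w + u (L w)) / δ)
            * Q2 (fun w' : E => (M w' + u (L w')) / δ) w t from h,
      Real.deriv_exp, Real.deriv_exp, hQa t]
    ring
  -- Q2 of ρ part
  have hQρ : ∀ t : E, Q2 (fun w' : E => e3 * ρ (L w')) w t = e3 * Q2 ρ (L w) (L t) := by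
    intro t
    rw [Q2_const_mul hΩo hwΩ hρL2 e3]
    have h := Q2_comp_clm Lr hUo hρ2 hw t
    rw [show Q2 (fun w' : E => ρ (L w')) w t = Q2 ρ (L w) (L t) from h]
  -- total
  have hQA : ∀ t : E, Q2 (fun w' : E => Real.exp ((M w' + u (L w')) / δ) + e3 * ρ (L w')) w t
      = Real.exp ((M w + u (L w)) / δ)
          * ((fderiv ℝ (fun w' : E => (M w' + u (L w')) / δ) w t) ^ 2
            + δ⁻¹ * Q2 u (L w) (L t))
        + e3 * Q2 ρ (L w) (L t) := by
    intro t
    rw [Q2_add hΩo hwΩ hexpa2 he3ρ2, hQexp t, hQρ t]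
  have hI : L (Complex.I • s) = Complex.I • L s := map_smul L _ _
  have hfun : (fun w' => Real.exp ((2 * (Lc w').re + u (L w')) / δ) + e3 * ρ (L w'))
      = fun w' : E => Real.exp ((M w' + u (L w')) / δ) + e3 * ρ (L w') := by
    funext w'; rw [hMw w']
  refine ⟨Real.exp ((M w + u (L w)) / δ) * (1 / 4)
      * ((fderiv ℝ (fun w' : E => (M w' + u (L w')) / δ) w s) ^ 2
        + (fderiv ℝ (fun w' : E => (M w' + u (L w')) / δ) w (Complex.I • s)) ^ 2),
    by positivity, ?_⟩
  rw [hfun, hMw w, levi_eq_Q2, hQA s, hQA (Complex.I • s), hI, levi_eq_Q2 u, levi_eq_Q2 ρ]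
  ring

/-- Smoothness of `p ∘ λ̃_δ`. -/
theorem smooth_master {n : WithTop ℕ∞} (L : E →L[ℂ] F) (Lc : E →L[ℂ] ℂ) (U V : Set F) (hUV : U ⊆ V)
    (u ρ : F → ℝ) (hu : ContDiffOn ℝ n u V) (hρ : ContDiffOn ℝ n ρ U)
    (p : ℝ → ℝ) (hp : ContDiff ℝ n p) (δ e3 : ℝ)
    (Ω : Set E) (hmaps : ∀ x ∈ Ω, L x ∈ U) :
    ContDiffOn ℝ n
      (fun w' => p (Real.exp ((2 * (Lc w').re + u (L w')) / δ) + e3 * ρ (L w'))) Ω := by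
  have huL : ContDiffOn ℝ n (fun w' : E => u (L w')) Ω :=
    hu.comp ((L.restrictScalars ℝ).contDiff.contDiffOn) (fun x hx => hUV (hmaps x hx))
  have hρL : ContDiffOn ℝ n (fun w' : E => ρ (L w')) Ω :=
    hρ.comp ((L.restrictScalars ℝ).contDiff.contDiffOn) hmaps
  have hre : ContDiffOn ℝ n (fun w' : E => 2 * (Lc w').re) Ω := by
    have h1 : ContDiffOn ℝ n (fun w' : E =>
        (Complex.reCLM.comp (Lc.restrictScalars ℝ)) w') Ω :=
      (Complex.reCLM.comp (Lc.restrictScalars ℝ)).contDiff.contDiffOn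
    exact contDiffOn_const.mul h1
  exact hp.comp_contDiffOn
    ((Real.contDiff_exp.comp_contDiffOn ((hre.add huL).div_const δ)).add
      (contDiffOn_const.mul hρL))

end LeviRules

/-! ### Concrete continuous linear maps -/

def projCLM (n : ℕ) : Cn (n + 1) →L[ℂ] Cn n :=
  LinearMap.toContinuousLinearMap
    { toFun := proj n
      map_add' := fun _ _ => rfl
      map_smul' := fun _ _ => by ext; simp [proj] }

def lastCLM (n : ℕ) : Cn (n + 1) →L[ℂ] ℂ :=
  LinearMap.toContinuousLinearMap
    { toFun := fun w => w (Fin.last n)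
      map_add' := fun _ _ => rfl
      map_smul' := fun _ _ => rfl }

/-- Pointwise nonnegativity of the Levi form of `p ∘ λ̃_δ`. -/
theorem main_pointwise {E F : Type*} [NormedAddCommGroup E] [NormedSpace ℂ E]
    [NormedAddCommGroup F] [NormedSpace ℂ F]
    (L : E →L[ℂ] F) (Lc : E →L[ℂ] ℂ) (U V : Set F)
    (hUo : IsOpen U) (hVo : IsOpen V) (hUV : U ⊆ V)
    (u ρ : F → ℝ) (hu2 : ContDiffOn ℝ 2 u V) (hρ2 : ContDiffOn ℝ 2 ρ U)
    (hu_psh : ∀ z ∈ V, ∀ s : F, 0 ≤ levi u z s)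
    (p : ℝ → ℝ) (hp : ContDiff ℝ (⊤ : ℕ∞) p) (hpconv : ConvexOn ℝ Set.univ p)
    (hpmono : Monotone p) (hp0 : ∀ t : ℝ, t ≤ Real.exp (-2) → p t = 0)
    (δ : ℝ) (hδ : 0 < δ)
    (hρ01 : ∀ z ∈ U, 0 ≤ ρ z ∧ ρ z ≤ 1)
    (hlb : ∀ z ∈ U, ∀ s : F, 0 ≤ levi (fun z' => u z' / δ + ρ z') z s)
    {w : E} (hw : L w ∈ U) (s : E) :
    0 ≤ levi (fun w' =>
        p (Real.exp ((2 * (Lc w').re + u (L w')) / δ) + Real.exp (-3) * ρ (L w'))) w s := by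
  have hΩo : IsOpen ((L.restrictScalars ℝ) ⁻¹' U) :=
    hUo.preimage (L.restrictScalars ℝ).continuous
  have hwΩ : w ∈ (L.restrictScalars ℝ) ⁻¹' U := hw
  -- smoothness of λ̃ (via `smooth_master` with `p := id`)
  have hA2 : ContDiffOn ℝ 2
      (fun w' : E => Real.exp ((2 * (Lc w').re + u (L w')) / δ) + Real.exp (-3) * ρ (L w'))
      ((L.restrictScalars ℝ) ⁻¹' U) :=
    smooth_master L Lc U V hUV u ρ hu2 hρ2 id contDiff_id δ (Real.exp (-3))
      ((L.restrictScalars ℝ) ⁻¹' U) (fun x hx => hx)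
  obtain ⟨X, hX0, hXeq⟩ := levi_comp_p p (hp.of_le (WithTop.coe_le_coe.mpr le_top)) hΩo hA2 hwΩ s
  obtain ⟨Y, hY0, hYeq⟩ := levi_master L Lc U V hUo hVo hUV u ρ hu2 hρ2
    δ (Real.exp (-3)) hw s
  have hval := levi_div_add δ hUo (hu2.mono hUV) hρ2 hw (L s)
  rw [hXeq, hYeq]
  have hp'' : 0 ≤ deriv (deriv p)
      (Real.exp ((2 * (Lc w).re + u (L w)) / δ) + Real.exp (-3) * ρ (L w)) :=
    deriv2_p_nonneg hp hpconv _
  rcases le_or_gt (Real.exp ((2 * (Lc w).re + u (L w)) / δ) + Real.exp (-3) * ρ (L w))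
      (Real.exp (-2)) with hle | hgt
  · -- degenerate region: p' vanishes
    rw [deriv_p_eq_zero hp hp0 _ hle]
    have := mul_nonneg hp'' hX0
    linarith
  · -- region where λ̃ > e⁻²
    have hρw := hρ01 _ hw
    have hexp_lb : Real.exp (-3) ≤ Real.exp ((2 * (Lc w).re + u (L w)) / δ) := by
      have h2 : Real.exp (-2) = Real.exp (-3) * Real.exp 1 := by
        rw [← Real.exp_add]; norm_num
      nlinarith [Real.add_one_le_exp (1 : ℝ), Real.exp_pos (-3), hρw.1, hρw.2]
    have hlu : 0 ≤ levi u (L w) (L s) := hu_psh _ (hUV hw) _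
    have hq : 0 ≤ levi (fun z' => u z' / δ + ρ z') (L w) (L s) := hlb _ hw (L s)
    have hδi : (0:ℝ) ≤ δ⁻¹ := inv_nonneg.2 hδ.le
    have hlρ : levi ρ (L w) (L s)
        = levi (fun z' => u z' / δ + ρ z') (L w) (L s) - δ⁻¹ * levi u (L w) (L s) := by
      linarith [hval]
    have hlA : 0 ≤ Y + Real.exp ((2 * (Lc w).re + u (L w)) / δ) * δ⁻¹ * levi u (L w) (L s)
        + Real.exp (-3) * levi ρ (L w) (L s) := by
      rw [hlρ]
      have t1 : 0 ≤ (Real.exp ((2 * (Lc w).re + u (L w)) / δ) - Real.exp (-3))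
          * (δ⁻¹ * levi u (L w) (L s)) :=
        mul_nonneg (by linarith) (mul_nonneg hδi hlu)
      have t2 : 0 ≤ Real.exp (-3) * levi (fun z' => u z' / δ + ρ z') (L w) (L s) :=
        mul_nonneg (Real.exp_pos (-3)).le hq
      nlinarith [t1, t2, hY0]
    have hp' : 0 ≤ deriv p
        (Real.exp ((2 * (Lc w).re + u (L w)) / δ) + Real.exp (-3) * ρ (L w)) :=
      deriv_nonneg_of_monotone hpmono _
    nlinarith [mul_nonneg hp' hlA, mul_nonneg hp'' hX0]

/-- Step 2 of the proof of the Main Lemma: `λ_δ = p ∘ λ̃_δ` is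
plurisubharmonic on `U × ℂ`. -/
theorem step_two (n : ℕ) (V : Set (Cn n)) (hV : IsOpen V) (h0V : (0 : Cn n) ∈ V)
    (u : Cn n → ℝ) (hu : PSHOn u V) (hu0 : u 0 = 0)
    (U : Set (Cn n)) (hUo : IsOpen U) (h0U : (0 : Cn n) ∈ U)
    (hUV : closure U ⊆ V) (hUc : IsCompact (closure U))
    (C ε : ℝ) (hC : 0 < C) (hε : 0 < ε) (hε' : ε ≤ 1 / 2)
    (p : ℝ → ℝ) (hp : ContDiff ℝ (⊤ : ℕ∞) p) (hpconv : ConvexOn ℝ Set.univ p)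
    (hpmono : Monotone p) (hp0 : ∀ t : ℝ, t ≤ Real.exp (-2) → p t = 0)
    (hppos : ∀ t : ℝ, Real.exp (-2) < t → 0 < p t ∧ 0 < deriv p t) :
    ∃ δ₀ > (0 : ℝ), ∀ δ : ℝ, 0 < δ → δ < δ₀ →
      ∀ ρ : Cn n → ℝ, ContDiffOn ℝ (⊤ : ℕ∞) ρ U →
        (∀ z ∈ U, 0 ≤ ρ z ∧ ρ z ≤ 1) →
        (∀ z ∈ U, ∀ s : Cn n,
          C * δ ^ (-(2 * ε)) * ‖s‖ ^ 2 ≤ levi (fun w => u w / δ + ρ w) z s) →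
        PSHOn (fun w' => p (Real.exp (rfun n u w' / δ) + Real.exp (-3) * ρ (proj n w')))
          {w : Cn (n + 1) | proj n w ∈ U} := by
  have hUV' : U ⊆ V := fun x hx => hUV (subset_closure hx)
  refine ⟨1, one_pos, ?_⟩
  intro δ hδ _ ρ hρs hρ01 hρlevi
  constructor
  · exact smooth_master (projCLM n) (lastCLM n) U V hUV' u ρ hu.1 hρs p hp δ
      (Real.exp (-3)) {w : Cn (n + 1) | proj n w ∈ U} (fun x hx => hx)
  · intro w hw s
    have h0 : ∀ z ∈ U, ∀ t : Cn n, 0 ≤ levi (fun z' => u z' / δ + ρ z') z t := by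
      intro z hz t
      refine le_trans ?_ (hρlevi z hz t)
      exact mul_nonneg (mul_nonneg hC.le (Real.rpow_nonneg hδ.le _))
        (pow_nonneg (norm_nonneg t) 2)
    exact main_pointwise (projCLM n) (lastCLM n) U V hUo hV hUV' u ρ
      (hu.1.of_le (WithTop.coe_le_coe.mpr le_top)) (hρs.of_le (WithTop.coe_le_coe.mpr le_top)) hu.2 p hp hpconv hpmono hp0 δ hδ hρ01 h0 hw s

end
end
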